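/- arXiv:1209.3627 — 3 statements merged into one kernel-verified Lean document; each statement's English description precedes it below -/
import Mathlib

section
/- Let p < q be odd primes, and let ρ and σ be the unique non-negative integers satisfying 1 + pq = ρp + σq. Let 0 ≤ m < pq, let α₁ be the unique integer with 0 ≤ α₁ ≤ q−1 and α₁p ≡ m (mod q), and let β₁ be the unique integer with 0 ≤ β₁ ≤ p−1 and β₁q ≡ m (mod p). Then the coefficient a_{pq}(m) of x^m in the pq-th cyclotomic polynomial equals 1 if m = α₁p + β₁q with 0 ≤ α₁ ≤ ρ−1 and 0 ≤ β₁ ≤ σ−1; it equals −1 if m = α₁p + β₁q − pq with ρ ≤ α₁ ≤ q−1 and σ ≤ β₁ ≤ p−1; and it equals 0 otherwise. -/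
/-!
Since `Φ_{pq} (X^p - 1) (X^q - 1) = (X^{pq} - 1) (X - 1)` and `ρ p + σ q = 1 + p q`, multiplying
out geometric sums gives
`X^{pq} Φ_{pq} = X^{pq} (∑_{i<ρ} X^{ip}) (∑_{j<σ} X^{jq}) - (∑_{ρ≤i<q} X^{ip}) (∑_{σ≤j<p} X^{jq})`.
As `p` and `q` are coprime, an exponent `i p + j q` with `i < q`, `j < p` determines `(i, j)` by
its residue mod `p q`; an exponent congruent to `m` forces `(i, j) = (α₁, β₁)`. So each product
contributes at most one monomial to the coefficient of `X^{m + pq}`.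
-/

open Polynomial Finset

theorem Nat.le_and_le_of_one_add_mul_eq {p q ρ σ : ℕ} (hp : 2 ≤ p) (hq : 2 ≤ q)
    (h : 1 + p * q = ρ * p + σ * q) : ρ ≤ q ∧ σ ≤ p :=
  ⟨by nlinarith, by nlinarith⟩

theorem Nat.eq_of_mul_add_mul_modEq {p q i j α n : ℕ} (hpq : p.Coprime q) (hi : i < q)
    (hα : α < q) (hαn : α * p ≡ n [MOD q]) (h : i * p + j * q ≡ n [MOD q]) : i = α := by
  have hip : i * p ≡ α * p [MOD q] :=
    ((Nat.add_mul_mod_self_right _ _ _).symm.trans h).trans hαn.symm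
  exact (hip.cancel_right_of_coprime hpq.symm).eq_of_lt_of_lt hi hα

theorem Nat.eq_and_eq_of_mul_add_mul_modEq {p q i j α β n : ℕ} (hpq : p.Coprime q) (hi : i < q)
    (hj : j < p) (hα : α < q) (hβ : β < p) (hαn : α * p ≡ n [MOD q]) (hβn : β * q ≡ n [MOD p])
    (h : i * p + j * q ≡ n [MOD p * q]) : i = α ∧ j = β :=
  ⟨Nat.eq_of_mul_add_mul_modEq hpq hi hα hαn (h.of_mul_left p),
    Nat.eq_of_mul_add_mul_modEq hpq.symm hj hβ hβn (add_comm (i * p) _ ▸ h.of_mul_right q)⟩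

theorem Finset.sum_boole_eq_ite_of_imp_eq {ι M : Type*} [DecidableEq ι] [AddCommMonoidWithOne M]
    {s : Finset ι} {P : ι → Prop} [DecidablePred P] {a : ι} (h : ∀ x ∈ s, P x → x = a) :
    (∑ x ∈ s, if P x then (1 : M) else 0) = if a ∈ s ∧ P a then 1 else 0 := by
  split_ifs with ha
  · rw [sum_eq_single_of_mem a ha.1 fun b hb hba => if_neg fun hPb => hba (h b hb hPb), if_pos ha.2]
  · refine sum_eq_zero fun x hx => if_neg fun hPx => ha ?_
    obtain rfl := h x hx hPx
    exact ⟨hx, hPx⟩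

namespace Polynomial

variable {R : Type*} [CommRing R]

theorem cyclotomic_prime_mul_prime_mul_X_pow_sub_one {p q : ℕ} (hp : p.Prime) (hq : q.Prime)
    (hpq : p ≠ q) :
    cyclotomic (p * q) R * ((X ^ p - 1) * (X ^ q - 1)) = (X ^ (p * q) - 1) * (X - 1) := by
  have := Fact.mk hq
  have hexp : expand R p (cyclotomic q R) * (X ^ p - 1) = X ^ (p * q) - 1 := by
    simpa [pow_mul] using congrArg (expand R p) (cyclotomic_prime_mul_X_sub_one R q)
  rw [cyclotomic_expand_eq_cyclotomic_mul hp ((Nat.prime_dvd_prime_iff_eq hp hq).not.mpr hpq),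
    mul_comm q p] at hexp
  rw [← cyclotomic_prime_mul_X_sub_one R q]
  linear_combination (X - 1) * hexp

theorem X_pow_mul_cyclotomic_prime_mul_prime {p q ρ σ : ℕ} (hp : p.Prime) (hq : q.Prime)
    (hpq : p ≠ q) (hρσ : 1 + p * q = ρ * p + σ * q) :
    X ^ (p * q) * cyclotomic (p * q) R =
      X ^ (p * q) * ((∑ i ∈ range ρ, (X ^ p) ^ i) * ∑ j ∈ range σ, (X ^ q) ^ j) -
        (∑ i ∈ Ico ρ q, (X ^ p) ^ i) * ∑ j ∈ Ico σ p, (X ^ q) ^ j := by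
  obtain ⟨hρ, hσ⟩ := Nat.le_and_le_of_one_add_mul_eq hp.two_le hq.two_le hρσ
  have hmonic : ((X ^ p - 1) * (X ^ q - 1) : R[X]).Monic := by
    simpa using (monic_X_pow_sub_C (1 : R) hp.ne_zero).mul (monic_X_pow_sub_C 1 hq.ne_zero)
  refine hmonic.isRegular.right ?_
  have hX : (X ^ p) ^ ρ * (X ^ q) ^ σ = (X * X ^ (p * q) : R[X]) := by
    rw [← pow_mul, ← pow_mul, ← pow_add, ← pow_succ', mul_comm p ρ, mul_comm q σ, ← hρσ, add_comm]
  have hpq' : (X ^ p) ^ q = (X ^ (p * q) : R[X]) := (pow_mul _ _ _).symm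
  have hqp : (X ^ q) ^ p = (X ^ (p * q) : R[X]) := by rw [← pow_mul, mul_comm]
  dsimp only
  calc X ^ (p * q) * cyclotomic (p * q) R * ((X ^ p - 1) * (X ^ q - 1))
      = X ^ (p * q) * ((X ^ (p * q) - 1) * (X - 1)) := by
        rw [mul_assoc, cyclotomic_prime_mul_prime_mul_X_pow_sub_one hp hq hpq]
    _ = X ^ (p * q) * (((X ^ p) ^ ρ - 1) * ((X ^ q) ^ σ - 1)) -
          ((X ^ p) ^ q - (X ^ p) ^ ρ) * ((X ^ q) ^ p - (X ^ q) ^ σ) := by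
        rw [hpq', hqp]
        linear_combination (1 - X ^ (p * q)) * hX
    _ = _ := by
        have gA := geom_sum_mul (X ^ p : R[X]) ρ
        have gB := geom_sum_mul (X ^ q : R[X]) σ
        have gC := geom_sum_Ico_mul (X ^ p : R[X]) hρ
        have gD := geom_sum_Ico_mul (X ^ q : R[X]) hσ
        linear_combination
          (-X ^ (p * q)) * ((∑ j ∈ range σ, (X ^ q) ^ j) * (X ^ q - 1) * gA +
            ((X ^ p) ^ ρ - 1) * gB) +
          (∑ j ∈ Ico σ p, (X ^ q) ^ j) * (X ^ q - 1) * gC + ((X ^ p) ^ q - (X ^ p) ^ ρ) * gD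

theorem coeff_geom_sum_mul_geom_sum (s t : Finset ℕ) (d e m : ℕ) :
    ((∑ i ∈ s, (X ^ d) ^ i) * ∑ j ∈ t, (X ^ e) ^ j : R[X]).coeff m =
      ∑ x ∈ s ×ˢ t, if m = x.1 * d + x.2 * e then 1 else 0 := by
  simp only [sum_mul_sum, ← sum_product', finsetSum_coeff, ← pow_mul', ← pow_add, coeff_X_pow]

end Polynomial

theorem stmt_0_general (p q : ℕ) (hp : p.Prime) (hq : q.Prime)
    (hpq : p < q) (ρ σ : ℕ) (hρσ : 1 + p * q = ρ * p + σ * q)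
    (m : ℕ)
    (α₁ : ℕ) (hα₁ : α₁ ≤ q - 1) (hα₁c : α₁ * p ≡ m [MOD q])
    (β₁ : ℕ) (hβ₁ : β₁ ≤ p - 1) (hβ₁c : β₁ * q ≡ m [MOD p]) :
    (Polynomial.cyclotomic (p * q) ℤ).coeff m =
      if m = α₁ * p + β₁ * q ∧ α₁ < ρ ∧ β₁ < σ then 1
      else if (m : ℤ) = α₁ * p + β₁ * q - p * q ∧ ρ ≤ α₁ ∧ α₁ ≤ q - 1 ∧ σ ≤ β₁ ∧ β₁ ≤ p - 1
        then -1
      else 0 := by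
  have hp₂ := hp.two_le
  have hq₂ := hq.two_le
  obtain ⟨hρ, hσ⟩ := Nat.le_and_le_of_one_add_mul_eq hp₂ hq₂ hρσ
  have hunique (x : ℕ × ℕ) (hx₁ : x.1 < q) (hx₂ : x.2 < p)
      (hx : x.1 * p + x.2 * q ≡ m [MOD p * q]) : x = (α₁, β₁) :=
    Prod.ext_iff.mpr <| Nat.eq_and_eq_of_mul_add_mul_modEq
      ((Nat.coprime_primes hp hq).mpr hpq.ne) hx₁ hx₂ (by omega) (by omega) hα₁c hβ₁c hx
  have hcoeff := congrArg (coeff · (m + p * q))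
    (X_pow_mul_cyclotomic_prime_mul_prime (R := ℤ) hp hq hpq.ne hρσ)
  simp only [coeff_X_pow_mul, coeff_sub, coeff_geom_sum_mul_geom_sum] at hcoeff
  rw [hcoeff, sum_boole_eq_ite_of_imp_eq (a := (α₁, β₁)), sum_boole_eq_ite_of_imp_eq (a := (α₁, β₁))]
  · have hshifted : ((ρ ≤ α₁ ∧ α₁ < q) ∧ σ ≤ β₁ ∧ β₁ < p) ∧ m + p * q = α₁ * p + β₁ * q ↔
        (m : ℤ) = α₁ * p + β₁ * q - p * q ∧ ρ ≤ α₁ ∧ α₁ ≤ q - 1 ∧ σ ≤ β₁ ∧ β₁ ≤ p - 1 := by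
      zify
      omega
    simp only [mem_product, mem_range, mem_Ico, hshifted, and_comm (a := α₁ < ρ ∧ β₁ < σ)]
    split_ifs
    · omega
    all_goals norm_num
  · intro x hx hxm
    simp only [mem_product, mem_Ico] at hx
    exact hunique x (by omega) (by omega) (by rw [← hxm]; exact Nat.add_mod_right m (p * q))
  · intro x hx hxm
    simp only [mem_product, mem_range] at hx
    exact hunique x (by omega) (by omega) (by rw [← hxm])

/-- Lemma (Lam–Leung): coefficients of binary cyclotomic polynomials `Φ_{pq}`. -/
theorem stmt_0 (p q : ℕ) (hp : p.Prime) (hq : q.Prime) (hpodd : Odd p) (hqodd : Odd q)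
    (hpq : p < q) (ρ σ : ℕ) (hρσ : 1 + p * q = ρ * p + σ * q)
    (m : ℕ) (hm : m < p * q)
    (α₁ : ℕ) (hα₁ : α₁ ≤ q - 1) (hα₁c : α₁ * p ≡ m [MOD q])
    (β₁ : ℕ) (hβ₁ : β₁ ≤ p - 1) (hβ₁c : β₁ * q ≡ m [MOD p]) :
    (Polynomial.cyclotomic (p * q) ℤ).coeff m =
      if m = α₁ * p + β₁ * q ∧ α₁ < ρ ∧ β₁ < σ then 1
      else if (m : ℤ) = α₁ * p + β₁ * q - p * q ∧ ρ ≤ α₁ ∧ α₁ ≤ q - 1 ∧ σ ≤ β₁ ∧ β₁ ≤ p - 1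
        then -1
      else 0 :=
  stmt_0_general p q hp hq hpq ρ σ hρσ m α₁ hα₁ hα₁c β₁ hβ₁ hβ₁c
end

section
/- For every prime p ≥ 11 the set 𝓑(p) is non-empty and max 𝓑(p) = (p−3)/2; more precisely, every element of 𝓑(p) is at most (p−3)/2, and: if p ≡ 1 (mod 3) then (p−3)/2 ∈ 𝓑₊(p), while if p ≡ 2 (mod 3) then (p−3)/2 ∈ 𝓑₋(p). -/
/-- The inverse of `b` modulo `p`, normalized to lie in `[0, p-1]`. -/
def modInv (p b : ℕ) : ℕ := ((b : ZMod p)⁻¹).val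

/-- The set `𝓑₋(p)` of integers `β` with `1 ≤ β ≤ (p-3)/2`, `p ≤ β + 2β̄ + 1` and `β > β̄`. -/
def Bminus (p : ℕ) : Finset ℕ :=
  (Finset.Icc 1 p).filter fun β =>
    2 * β + 3 ≤ p ∧ p ≤ β + 2 * modInv p β + 1 ∧ modInv p β < β

/-- The set `𝓑₊(p)` of integers `β` with `1 ≤ β ≤ (p-3)/2`, `β + β̄ ≥ p` and `β̄ ≤ 2β`. -/
def Bplus (p : ℕ) : Finset ℕ :=
  (Finset.Icc 1 p).filter fun β =>
    2 * β + 3 ≤ p ∧ p ≤ β + modInv p β ∧ modInv p β ≤ 2 * β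

/-- The set `𝓑(p) = 𝓑₋(p) ∪ 𝓑₊(p)`. -/
def Bset (p : ℕ) : Finset ℕ := Bminus p ∪ Bplus p

/-! For `p = 6k + 7` the inverse of `(p - 3)/2 = 3k + 2` is `4k + 4`, and for `p = 6k + 5` the
inverse of `(p - 3)/2 = 3k + 1` is `2k + 1`; both follow from a polynomial identity in `k`, after
which membership in `𝓑₊(p)`, resp. `𝓑₋(p)`, is linear arithmetic. The upper bound is built into
the definitions through `2β + 3 ≤ p`. -/

theorem modInv_eq_of_mul_eq {n x y : ℕ} (q : ℕ) (hy : y < n) (h : x * y = q * n + 1) :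
    modInv n x = y := by
  have hxy : (x : ZMod n) * y = 1 := by
    exact_mod_cast (congrArg (fun m : ℕ => (m : ZMod n)) h).trans (by simp)
  rw [modInv, ZMod.inv_eq_of_mul_eq_one n _ _ hxy, ZMod.val_natCast_of_lt hy]

theorem modInv_six_mul_add_seven (k : ℕ) : modInv (6 * k + 7) (3 * k + 2) = 4 * k + 4 :=
  modInv_eq_of_mul_eq (2 * k + 1) (by omega) (by ring)

theorem modInv_six_mul_add_five (k : ℕ) : modInv (6 * k + 5) (3 * k + 1) = 2 * k + 1 :=
  modInv_eq_of_mul_eq k (by omega) (by ring)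

theorem half_sub_three_mem_Bplus {p : ℕ} (hp : p % 6 = 1) (h13 : 13 ≤ p) :
    (p - 3) / 2 ∈ Bplus p := by
  obtain ⟨k, rfl⟩ : ∃ k, p = 6 * k + 7 := ⟨(p - 7) / 6, by omega⟩
  rw [show (6 * k + 7 - 3) / 2 = 3 * k + 2 by omega]
  simp only [Bplus, Finset.mem_filter, Finset.mem_Icc, modInv_six_mul_add_seven]
  omega

theorem half_sub_three_mem_Bminus {p : ℕ} (hp : p % 6 = 5) (h11 : 11 ≤ p) :
    (p - 3) / 2 ∈ Bminus p := by
  obtain ⟨k, rfl⟩ : ∃ k, p = 6 * k + 5 := ⟨p / 6, by omega⟩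
  rw [show (6 * k + 5 - 3) / 2 = 3 * k + 1 by omega]
  simp only [Bminus, Finset.mem_filter, Finset.mem_Icc, modInv_six_mul_add_five]
  omega

theorem le_half_sub_three_of_mem_Bset {p β : ℕ} (hβ : β ∈ Bset p) : β ≤ (p - 3) / 2 := by
  simp only [Bset, Bminus, Bplus, Finset.mem_union, Finset.mem_filter] at hβ
  omega

theorem stmt_5 (p : ℕ) (hp : p.Prime) (hp11 : 11 ≤ p) :
    ∃ hne : (Bset p).Nonempty,
      (Bset p).max' hne = (p - 3) / 2 ∧
      (∀ β ∈ Bset p, β ≤ (p - 3) / 2) ∧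
      (p % 3 = 1 → (p - 3) / 2 ∈ Bplus p) ∧
      (p % 3 = 2 → (p - 3) / 2 ∈ Bminus p) := by
  have hodd : p % 2 = 1 := by
    rcases hp.eq_two_or_odd with h | h <;> omega
  have hmod3 : p % 3 ≠ 0 := by
    intro h
    have := (Nat.prime_dvd_prime_iff_eq Nat.prime_three hp).mp (Nat.dvd_of_mod_eq_zero h)
    omega
  have hplus : p % 3 = 1 → (p - 3) / 2 ∈ Bplus p := fun h =>
    half_sub_three_mem_Bplus (by omega) (by omega)
  have hminus : p % 3 = 2 → (p - 3) / 2 ∈ Bminus p := fun h =>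
    half_sub_three_mem_Bminus (by omega) hp11
  have hmem : (p - 3) / 2 ∈ Bset p := by
    rcases (by omega : p % 3 = 1 ∨ p % 3 = 2) with h | h
    · exact Finset.mem_union_right _ (hplus h)
    · exact Finset.mem_union_left _ (hminus h)
  exact ⟨⟨_, hmem⟩, (Finset.max'_eq_iff _ _ _).mpr ⟨hmem, fun _ => le_half_sub_three_of_mem_Bset⟩,
    fun _ => le_half_sub_three_of_mem_Bset, hplus, hminus⟩
end

section
/- There exists a positive constant c such that for every prime p with p ≡ 1 (mod 3) and every pair of integers (x, y) with 1 ≤ x ≤ (p−3)/2, 1 ≤ y ≤ p−1, p ≤ x + 2y + 1, x > y, and xy ≡ 1 (mod p), one has x − (p−1)/3 ≥ c·√p. -/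
/-!
Write `p = 3q + 1` and put `A = 3x - p`, `B = 3y - p`, so that `x - q = (A + 1)/3`.
Modulo `p`, `AB ≡ 9xy ≡ 9`; modulo `3`, `AB - 9 ≡ p² ≡ 1`. Hence `AB - 9` is a nonzero
multiple of `p`, and `p ≤ |AB - 9|`. The constraints on `(x, y)` say `2 ≤ A` and
`-(A + 3)/2 ≤ B ≤ A`, which give `|AB - 9| ≤ 4A²`, i.e. `√p ≤ 2A`.
-/

theorem Int.ModEq.three_mul_sub_mul_three_mul_sub {p x y : ℤ} (h : x * y ≡ 1 [ZMOD p]) :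
    (3 * x - p) * (3 * y - p) ≡ 9 [ZMOD p] :=
  calc (3 * x - p) * (3 * y - p) = 9 * (x * y) + p * (p - 3 * x - 3 * y) := by ring
    _ ≡ 9 * 1 + 0 [ZMOD p] := (h.mul_left 9).add (Int.modEq_zero_iff_dvd.mpr (dvd_mul_right p _))
    _ = 9 := by norm_num

theorem Int.le_abs_three_mul_sub_mul_three_mul_sub_sub_nine {p x y : ℤ} (hp : p % 3 = 1)
    (h : x * y ≡ 1 [ZMOD p]) : p ≤ |(3 * x - p) * (3 * y - p) - 9| := by
  have hdvd : p ∣ (3 * x - p) * (3 * y - p) - 9 := h.three_mul_sub_mul_three_mul_sub.symm.dvd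
  have hne : (3 * x - p) * (3 * y - p) - 9 ≠ 0 := by
    have hsq : p * p % 3 = 1 := by rw [Int.mul_emod, hp]; rfl
    have hexp : (3 * x - p) * (3 * y - p) - 9 = 3 * (3 * x * y - p * x - p * y - 3) + p * p := by
      ring
    omega
  exact Int.le_of_dvd (abs_pos.mpr hne) ((dvd_abs _ _).mpr hdvd)

theorem abs_mul_sub_nine_le {R : Type*} [CommRing R] [LinearOrder R] [IsStrictOrderedRing R]
    {a b : R} (ha : 2 ≤ a) (hba : b ≤ a) (hab : -a - 3 ≤ 2 * b) : |a * b - 9| ≤ 4 * a ^ 2 := by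
  have ha0 : 0 ≤ a := by linarith
  rw [abs_le]
  constructor
  · have h7 : (0 : R) ≤ 7 * a + 11 := by linarith
    nlinarith [mul_le_mul_of_nonneg_left hab ha0, mul_nonneg (sub_nonneg.mpr ha) h7]
  · nlinarith [mul_le_mul_of_nonneg_left hba ha0]

theorem stmt_19 :
    ∃ c : ℝ, 0 < c ∧ ∀ p : ℕ, p.Prime → p % 3 = 1 →
      ∀ x y : ℕ, 1 ≤ x → 2 * x + 3 ≤ p → 1 ≤ y → y ≤ p - 1 →
        p ≤ x + 2 * y + 1 → y < x → x * y ≡ 1 [MOD p] →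
        c * Real.sqrt p ≤ (x : ℝ) - ((p : ℝ) - 1) / 3 := by
  refine ⟨1 / 6, by norm_num, ?_⟩
  intro p _ hp3 x y _ _ _ _ hsum hyx hxy
  have hp3' : (p : ℤ) % 3 = 1 := by omega
  have hmod : (x : ℤ) * y ≡ 1 [ZMOD p] := by exact_mod_cast Int.natCast_modEq_iff.mpr hxy
  set A : ℤ := 3 * x - p with hA
  have hA2 : 2 ≤ A := by omega
  have hp : (p : ℤ) ≤ 4 * A ^ 2 :=
    (Int.le_abs_three_mul_sub_mul_three_mul_sub_sub_nine hp3' hmod).trans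
      (abs_mul_sub_nine_le hA2 (by omega) (by omega))
  have hsqrt : Real.sqrt p ≤ 2 * A := by
    rw [Real.sqrt_le_iff]
    exact_mod_cast (⟨by omega, hp.trans_eq (by ring)⟩ : 0 ≤ 2 * A ∧ (p : ℤ) ≤ (2 * A) ^ 2)
  have hAR : (A : ℝ) = 3 * x - p := by rw [hA]; push_cast; ring
  linarith
end
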